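/- Let H be a separable real Hilbert space, B₁ and B₂ bounded linear operators on H, a ∈ H, q₀ > 0, μ a finite Borel measure on H, ρ : H → ℂ Borel measurable with ∫_H k(q₀; w) |ρ(w)| dμ(w) < ∞, and φ : H → ℂ Borel measurable with |φ(w)| ≤ 1 for all w. Let U_{q₀} = { λ ∈ ℂ : Re(λ) > 0 and |Im(λ^{−1/2})| < 1/√(2q₀) }. Then for every (λ₁, λ₂) ∈ U_{q₀} × U_{q₀} the function w ↦ φ(w) ψ(λ₁, λ₂; w) ρ(w) is μ-integrable, and the function T(λ₁, λ₂) = ∫_H φ(w) ψ(λ₁, λ₂; w) ρ(w) dμ(w) is analytic in each variable on U_{q₀}: for each fixed λ₂ ∈ U_{q₀} the map λ₁ ↦ T(λ₁, λ₂) is complex differentiable at every point of U_{q₀}, and symmetrically for each fixed λ₁ ∈ U_{q₀} the map λ₂ ↦ T(λ₁, λ₂) is complex differentiable at every point of U_{q₀}. -/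

import Mathlib

open MeasureTheory
open scoped RealInnerProductSpace

/-- The function `ψ(λ₁, λ₂; w)` of equation (3.8) of the paper, with `Bⱼ` playing
the role of `Aⱼ^{1/2}`. -/
noncomputable def psi {H : Type*} [NormedAddCommGroup H] [InnerProductSpace ℝ H]
    (B₁ B₂ : H →L[ℝ] H) (a : H) (l₁ l₂ : ℂ) (w : H) : ℂ :=
  Complex.exp
    ((-((‖B₁ w‖ : ℂ) ^ 2) / (2 * l₁)
        + Complex.I * l₁ ^ (-(1 : ℂ) / 2) * ((⟪B₁ w, a⟫ : ℝ) : ℂ))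
      + (-((‖B₂ w‖ : ℂ) ^ 2) / (2 * l₂)
        + Complex.I * l₂ ^ (-(1 : ℂ) / 2) * ((⟪B₂ w, a⟫ : ℝ) : ℂ)))

/-- The dominating function `k(q₀; w)` of equation (3.10) of the paper. -/
noncomputable def kfun {H : Type*} [NormedAddCommGroup H] [InnerProductSpace ℝ H]
    (B₁ B₂ : H →L[ℝ] H) (a : H) (q₀ : ℝ) (w : H) : ℝ :=
  Real.exp ((2 * q₀) ^ (-(1 : ℝ) / 2) * ‖B₁‖ * ‖w‖ * ‖a‖
    + (2 * q₀) ^ (-(1 : ℝ) / 2) * ‖B₂‖ * ‖w‖ * ‖a‖)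

/-!
On `U_{q₀}` we have `Re λ > 0`, so `Re (-‖B w‖² / (2λ)) ≤ 0`, while the oscillatory term has real
part at most `|Im λ^{-1/2}| ‖B‖ ‖w‖ ‖a‖ ≤ (2q₀)^{-1/2} ‖B‖ ‖w‖ ‖a‖`; hence `|φ ψ ρ| ≤ k |ρ|`
uniformly on `U_{q₀} × U_{q₀}`, which gives integrability. The integrand is holomorphic in each
`λⱼ`, and an integral of holomorphic functions dominated on an open set by one integrable function
is holomorphic there: Cauchy's estimate bounds the derivatives on smaller discs by the same
function divided by the radius, so one may differentiate under the integral sign.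
-/

open Filter Metric Topology

section ParametricIntegral

variable {α E : Type*} [MeasurableSpace α] {μ : Measure α} [NormedAddCommGroup E]

theorem aestronglyMeasurable_deriv_of_differentiableAt {𝕜 : Type*} [NontriviallyNormedField 𝕜]
    [NormedSpace 𝕜 E] {F : 𝕜 → α → E} {x₀ : 𝕜}
    (hF_meas : ∀ x, AEStronglyMeasurable (F x) μ)
    (h_diff : ∀ᵐ a ∂μ, DifferentiableAt 𝕜 (F · a) x₀) :
    AEStronglyMeasurable (fun a => deriv (F · a) x₀) μ := by
  -- the derivative is the a.e. limit of the measurable difference quotients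
  refine aestronglyMeasurable_of_tendsto_ae (𝓝[≠] x₀)
    (f := fun x a => slope (F · a) x₀ x) (fun x => ?_) ?_
  · simp only [slope_def_module]
    exact ((hF_meas x).sub (hF_meas x₀)).const_smul _
  · filter_upwards [h_diff] with a ha
    exact ha.hasDerivAt.tendsto_slope

variable [NormedSpace ℂ E]

theorem differentiableOn_integral_of_dominated {F : ℂ → α → E} {s : Set ℂ} {bound : α → ℝ}
    (hs : IsOpen s) (hF_meas : ∀ z, AEStronglyMeasurable (F z) μ)
    (hF_diff : ∀ᵐ a ∂μ, DifferentiableOn ℂ (F · a) s)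
    (h_bound : ∀ᵐ a ∂μ, ∀ z ∈ s, ‖F z a‖ ≤ bound a) (bound_integrable : Integrable bound μ) :
    DifferentiableOn ℂ (fun z => ∫ a, F z a ∂μ) s := by
  intro z₀ hz₀
  obtain ⟨ε, hε, hball⟩ : ∃ ε > 0, ball z₀ (2 * ε) ⊆ s := by
    obtain ⟨r, hr, hball⟩ := Metric.isOpen_iff.mp hs z₀ hz₀
    exact ⟨r / 2, half_pos hr, by rwa [mul_div_cancel₀ _ two_ne_zero]⟩
  have hsphere : ∀ z ∈ ball z₀ ε, closedBall z ε ⊆ s := fun z hz =>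
    (closedBall_subset_ball' (by rw [mem_ball] at hz; linarith)).trans hball
  -- Cauchy's estimate turns the bound on `F` into a bound on its derivative.
  have h_deriv_bound : ∀ᵐ a ∂μ, ∀ z ∈ ball z₀ ε, ‖deriv (F · a) z‖ ≤ bound a / ε := by
    filter_upwards [hF_diff, h_bound] with a hda hba z hz
    exact Complex.norm_deriv_le_of_forall_mem_sphere_norm_le hε
      (hda.diffContOnCl_ball (hsphere z hz)) fun y hy => hba y (hsphere z hz (sphere_subset_closedBall hy))
  have h_hasDeriv : ∀ᵐ a ∂μ, ∀ z ∈ ball z₀ ε, HasDerivAt (F · a) (deriv (F · a) z) z := by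
    filter_upwards [hF_diff] with a hda z hz
    exact (hda.differentiableAt (hs.mem_nhds (hsphere z hz (mem_closedBall_self hε.le)))).hasDerivAt
  have hF_int : Integrable (F z₀) μ :=
    bound_integrable.mono' (hF_meas z₀) (h_bound.mono fun a ha => ha z₀ hz₀)
  have hF'_meas : AEStronglyMeasurable (fun a => deriv (F · a) z₀) μ :=
    aestronglyMeasurable_deriv_of_differentiableAt hF_meas
      (h_hasDeriv.mono fun a ha => (ha z₀ (mem_ball_self hε)).differentiableAt)
  exact (hasDerivAt_integral_of_dominated_loc_of_deriv_le (ball_mem_nhds z₀ hε)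
    (Eventually.of_forall hF_meas) hF_int hF'_meas h_deriv_bound
    (bound_integrable.div_const ε) h_hasDeriv).2.differentiableAt.differentiableWithinAt

end ParametricIntegral

section FresnelTransform

variable {H : Type*} [NormedAddCommGroup H] [InnerProductSpace ℝ H]

noncomputable def psiExponent (B : H →L[ℝ] H) (a : H) (l : ℂ) (w : H) : ℂ :=
  -((‖B w‖ : ℂ) ^ 2) / (2 * l) + Complex.I * l ^ (-(1 : ℂ) / 2) * ((⟪B w, a⟫ : ℝ) : ℂ)

def regionU (q₀ : ℝ) : Set ℂ :=
  {l : ℂ | 0 < l.re ∧ |(l ^ (-(1 : ℂ) / 2)).im| < 1 / Real.sqrt (2 * q₀)}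

theorem psi_eq_exp (B₁ B₂ : H →L[ℝ] H) (a : H) (l₁ l₂ : ℂ) (w : H) :
    psi B₁ B₂ a l₁ l₂ w = Complex.exp (psiExponent B₁ a l₁ w + psiExponent B₂ a l₂ w) :=
  rfl

theorem re_psiExponent_le (B : H →L[ℝ] H) (a w : H) {l : ℂ} (hl : 0 < l.re) :
    (psiExponent B a l w).re ≤ |(l ^ (-(1 : ℂ) / 2)).im| * ‖B‖ * ‖w‖ * ‖a‖ := by
  have hgauss : (-((‖B w‖ : ℂ) ^ 2) / (2 * l)).re ≤ 0 := by
    rw [show -((‖B w‖ : ℂ) ^ 2) / (2 * l) = ((-(‖B w‖ ^ 2 / 2) : ℝ) : ℂ) * l⁻¹ by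
      push_cast; ring, Complex.re_ofReal_mul, Complex.inv_re]
    exact mul_nonpos_of_nonpos_of_nonneg (neg_nonpos.mpr (by positivity))
      (div_nonneg hl.le (Complex.normSq_nonneg l))
  have hinner : |⟪B w, a⟫| ≤ ‖B‖ * ‖w‖ * ‖a‖ :=
    (abs_real_inner_le_norm _ _).trans (mul_le_mul_of_nonneg_right (B.le_opNorm w) (norm_nonneg a))
  have hosc : (Complex.I * l ^ (-(1 : ℂ) / 2) * ((⟪B w, a⟫ : ℝ) : ℂ)).re
      ≤ |(l ^ (-(1 : ℂ) / 2)).im| * ‖B‖ * ‖w‖ * ‖a‖ := by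
    simp only [Complex.mul_re, Complex.I_re, Complex.I_im, Complex.ofReal_re, Complex.ofReal_im,
      Complex.mul_im, zero_mul, one_mul, zero_sub, mul_zero, sub_zero]
    refine (le_abs_self _).trans ?_
    rw [abs_mul, abs_neg]
    calc _ ≤ |(l ^ (-(1 : ℂ) / 2)).im| * (‖B‖ * ‖w‖ * ‖a‖) :=
          mul_le_mul_of_nonneg_left hinner (abs_nonneg _)
      _ = _ := by ring
  rw [psiExponent, Complex.add_re]
  linarith

theorem abs_im_cpow_le_of_mem_regionU {q₀ : ℝ} {l : ℂ} (hl : l ∈ regionU q₀) :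
    |(l ^ (-(1 : ℂ) / 2)).im| ≤ (2 * q₀) ^ (-(1 : ℝ) / 2) := by
  obtain ⟨-, him⟩ := hl
  have hq : 0 < 2 * q₀ := Real.sqrt_pos.mp (one_div_pos.mp ((abs_nonneg _).trans_lt him))
  rw [show -(1 : ℝ) / 2 = -(1 / 2) by ring, Real.rpow_neg hq.le, ← Real.sqrt_eq_rpow, ← one_div]
  exact him.le

theorem norm_psi_le_kfun (B₁ B₂ : H →L[ℝ] H) (a : H) {q₀ : ℝ} {l₁ l₂ : ℂ}
    (h₁ : l₁ ∈ regionU q₀) (h₂ : l₂ ∈ regionU q₀) (w : H) :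
    ‖psi B₁ B₂ a l₁ l₂ w‖ ≤ kfun B₁ B₂ a q₀ w := by
  rw [psi_eq_exp, Complex.norm_exp, kfun, Complex.add_re, Real.exp_le_exp]
  gcongr
  · exact (re_psiExponent_le B₁ a w h₁.1).trans (by gcongr; exact abs_im_cpow_le_of_mem_regionU h₁)
  · exact (re_psiExponent_le B₂ a w h₂.1).trans (by gcongr; exact abs_im_cpow_le_of_mem_regionU h₂)

theorem differentiableAt_psiExponent (B : H →L[ℝ] H) (a w : H) {l : ℂ} (hl : 0 < l.re) :
    DifferentiableAt ℂ (fun l => psiExponent B a l w) l := by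
  have hl0 : 2 * l ≠ 0 := mul_ne_zero two_ne_zero fun h => by simp [h] at hl
  exact ((differentiableAt_const _).div ((differentiableAt_const _).mul differentiableAt_id)
    hl0).add (((differentiableAt_const _).mul (differentiableAt_id.cpow_const (Or.inl hl))).mul_const _)

theorem differentiableOn_psi_left (B₁ B₂ : H →L[ℝ] H) (a : H) (l₂ : ℂ) (w : H) :
    DifferentiableOn ℂ (fun l => psi B₁ B₂ a l l₂ w) {l | 0 < l.re} := fun _ hl =>
  ((differentiableAt_psiExponent B₁ a w hl).add_const _).cexp.differentiableWithinAt

theorem differentiableOn_psi_right (B₁ B₂ : H →L[ℝ] H) (a : H) (l₁ : ℂ) (w : H) :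
    DifferentiableOn ℂ (fun l => psi B₁ B₂ a l₁ l w) {l | 0 < l.re} := fun _ hl =>
  ((differentiableAt_psiExponent B₂ a w hl).const_add _).cexp.differentiableWithinAt

theorem continuous_psi (B₁ B₂ : H →L[ℝ] H) (a : H) (l₁ l₂ : ℂ) :
    Continuous (psi B₁ B₂ a l₁ l₂) := by
  unfold psi
  fun_prop

theorem isOpen_regionU (q₀ : ℝ) : IsOpen (regionU q₀) := by
  have hcont : ContinuousOn (fun l : ℂ => |(l ^ (-(1 : ℂ) / 2)).im|) {l | 0 < l.re} :=
    fun l hl =>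
      (Complex.continuous_im.continuousAt.comp (continuousAt_cpow_const (Or.inl hl))).abs
        |>.continuousWithinAt
  exact hcont.isOpen_inter_preimage (isOpen_lt continuous_const Complex.continuous_re) isOpen_Iio

end FresnelTransform

theorem stmt10 {H : Type*} [NormedAddCommGroup H] [InnerProductSpace ℝ H]
    [MeasurableSpace H] [BorelSpace H]
    (B₁ B₂ : H →L[ℝ] H) (a : H) (q₀ : ℝ)
    (μ : Measure H)
    (ρ : H → ℂ) (hρ : Measurable ρ)
    (hk : Integrable (fun w => kfun B₁ B₂ a q₀ w * ‖ρ w‖) μ)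
    (φ : H → ℂ) (hφm : Measurable φ) (hφ : ∀ w, ‖φ w‖ ≤ 1)
    (U : Set ℂ)
    (hU : U = {l : ℂ | 0 < l.re ∧ |(l ^ (-(1 : ℂ) / 2)).im| < 1 / Real.sqrt (2 * q₀)}) :
    (∀ l₁ ∈ U, ∀ l₂ ∈ U,
      Integrable (fun w => φ w * psi B₁ B₂ a l₁ l₂ w * ρ w) μ) ∧
    (∀ l₂ ∈ U, ∀ l₁ ∈ U,
      DifferentiableAt ℂ (fun z => ∫ w, φ w * psi B₁ B₂ a z l₂ w * ρ w ∂μ) l₁) ∧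
    (∀ l₁ ∈ U, ∀ l₂ ∈ U,
      DifferentiableAt ℂ (fun z => ∫ w, φ w * psi B₁ B₂ a l₁ z w * ρ w ∂μ) l₂) := by
  change U = regionU q₀ at hU
  subst hU
  have hmeas : ∀ l₁ l₂, AEStronglyMeasurable (fun w => φ w * psi B₁ B₂ a l₁ l₂ w * ρ w) μ :=
    fun l₁ l₂ => ((hφm.mul (continuous_psi B₁ B₂ a l₁ l₂).measurable).mul hρ).aestronglyMeasurable
  have hbound : ∀ l₁ ∈ regionU q₀, ∀ l₂ ∈ regionU q₀, ∀ w,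
      ‖φ w * psi B₁ B₂ a l₁ l₂ w * ρ w‖ ≤ kfun B₁ B₂ a q₀ w * ‖ρ w‖ := by
    intro l₁ h₁ l₂ h₂ w
    rw [norm_mul, norm_mul]
    gcongr
    simpa using mul_le_mul (hφ w) (norm_psi_le_kfun B₁ B₂ a h₁ h₂ w) (norm_nonneg _) zero_le_one
  have hU_nhds : ∀ l ∈ regionU q₀, regionU q₀ ∈ 𝓝 l := fun l hl => (isOpen_regionU q₀).mem_nhds hl
  refine ⟨fun l₁ h₁ l₂ h₂ => hk.mono' (hmeas l₁ l₂) (ae_of_all _ (hbound l₁ h₁ l₂ h₂)),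
    fun l₂ h₂ l₁ h₁ => ?_, fun l₁ h₁ l₂ h₂ => ?_⟩
  · refine (differentiableOn_integral_of_dominated (isOpen_regionU q₀) (fun z => hmeas z l₂)
      (ae_of_all _ fun w => ?_) (ae_of_all _ fun w z hz => hbound z hz l₂ h₂ w) hk).differentiableAt
      (hU_nhds l₁ h₁)
    exact (((differentiableOn_psi_left B₁ B₂ a l₂ w).const_mul (φ w)).mul_const (ρ w)).mono
      fun l hl => hl.1
  · refine (differentiableOn_integral_of_dominated (isOpen_regionU q₀) (hmeas l₁)
      (ae_of_all _ fun w => ?_) (ae_of_all _ fun w z hz => hbound l₁ h₁ z hz w) hk).differentiableAt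
      (hU_nhds l₂ h₂)
    exact (((differentiableOn_psi_right B₁ B₂ a l₁ w).const_mul (φ w)).mul_const (ρ w)).mono
      fun l hl => hl.1
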